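/- arXiv:2007.15932 — 2 statements merged into one kernel-verified Lean document; each statement's English description precedes it below -/
import Mathlib

section
/- The map ψ is a left inverse of φ: for every rectangular EW-tableau T with m rows and n columns, ψ(φ(T)) = T. -/
/- Combinatorial objects from "EW-tableaux and parallelogram polyominoes".
A tableau of type `(m+1, n+1)` (i.e. with `m+1` rows and `n+1` columns) is a
0/1-filling, encoded as a function to `Bool` (`true` = 1).  Rows are indexed
top to bottom, columns left to right, both starting at `0`.  The row labelled
`v i` (for `i < m+1`) and the column labelled `v ((m+1)+j)` (for `j < n+1`)
are recorded through permutations `rl`, `cl` of `Fin (m+1)`, `Fin (n+1)`. -/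

namespace EWPaper

/-- A 0/1 tableau with `m+1` rows and `n+1` columns; `true` encodes the entry 1. -/
abbrev Tab (m n : ℕ) := Fin (m + 1) → Fin (n + 1) → Bool

variable {m n : ℕ}

/-- A rectangular EW-tableau: the top row is all 1s, every other row contains a 0,
and no four cells forming the corners of a rectangle carry 0s in two diagonally
opposite corners and 1s in the other two. -/
def IsEW (T : Tab m n) : Prop :=
  (∀ j, T 0 j = true) ∧
  (∀ i : Fin (m + 1), i ≠ 0 → ∃ j, T i j = false) ∧
  (∀ (i i' : Fin (m + 1)) (j j' : Fin (n + 1)), i ≠ i' → j ≠ j' →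
    T i j = true → T i' j' = true → (T i j' = true ∨ T i' j = true))

/-- The (0-based) column index of the leftmost 1 of row `i`. -/
noncomputable def leftmost (T : Tab m n) (i : Fin (m + 1)) : ℕ :=
  sInf {j : ℕ | ∃ h : j < n + 1, T i ⟨j, h⟩ = true}

/-- The (0-based) column index of the rightmost 1 of row `i`. -/
noncomputable def rightmost (T : Tab m n) (i : Fin (m + 1)) : ℕ :=
  sSup {j : ℕ | ∃ h : j < n + 1, T i ⟨j, h⟩ = true}

/-- The (0-based) row index of the topmost 1 of column `j`. -/
noncomputable def topmost (T : Tab m n) (j : Fin (n + 1)) : ℕ :=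
  sInf {i : ℕ | ∃ h : i < m + 1, T ⟨i, h⟩ j = true}

/-- Parallelogram polyomino (as a 0/1 tableau): 1s in the two corners `(1,1)` and
`(m,n)`; every row has a nonempty contiguous set of 1s; leftmost and rightmost 1s
of the rows move weakly to the right going down. -/
def IsPara (T : Tab m n) : Prop :=
  T 0 0 = true ∧ T (Fin.last m) (Fin.last n) = true ∧
  (∀ i, ∃ j, T i j = true) ∧
  (∀ (i : Fin (m + 1)) (j j' j'' : Fin (n + 1)),
    j ≤ j' → j' ≤ j'' → T i j = true → T i j'' = true → T i j' = true) ∧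
  (∀ i i' : Fin (m + 1), i ≤ i' → leftmost T i ≤ leftmost T i') ∧
  (∀ i i' : Fin (m + 1), i ≤ i' → rightmost T i ≤ rightmost T i')

/-- The number of 1s of a tableau. -/
def ones (T : Tab m n) : ℕ :=
  (Finset.univ.filter fun p : Fin (m + 1) × Fin (n + 1) => T p.1 p.2 = true).card

/-- Ribbon parallelogram polyomino: a parallelogram polyomino of type `(m+1, n+1)`
with the minimal number `(m+1) + (n+1) - 1` of 1s. -/
def IsRib (T : Tab m n) : Prop := IsPara T ∧ ones T = m + n + 1

/-- A row- and column-labelled tableau: row `i` carries the label `v (rl i)` and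
column `j` carries the label `v ((m+1) + cl j)`. -/
structure Labelled (m n : ℕ) where
  T : Tab m n
  rl : Equiv.Perm (Fin (m + 1))
  cl : Equiv.Perm (Fin (n + 1))

/-- Labelled parallelogram polyomino: the underlying tableau is a parallelogram
polyomino, the top row is labelled `v 0`, rows whose leftmost 1s are the same
distance from the left side have labels increasing top to bottom, and columns
whose topmost 1s are at the same height have labels increasing left to right. -/
def IsLPara (D : Labelled m n) : Prop :=
  IsPara D.T ∧ D.rl 0 = 0 ∧
  (∀ i i' : Fin (m + 1), leftmost D.T i = leftmost D.T i' → i < i' → D.rl i < D.rl i') ∧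
  (∀ j j' : Fin (n + 1), topmost D.T j = topmost D.T j' → j < j' → D.cl j < D.cl j')

/-- Labelled ribbon parallelogram polyomino. -/
def IsLRib (D : Labelled m n) : Prop := IsLPara D ∧ ones D.T = m + n + 1

/-- Step 1 of `φ`: the stable sort of the columns by their number of 1s, ascending
(so that in an EW-tableau only 0s lie to the left of every 0), ties (identical
columns) broken by original label, increasing left to right. -/
def sortCols (T : Tab m n) : Equiv.Perm (Fin (n + 1)) :=
  Tuple.sort fun j => (Finset.univ.filter fun i => T i j = true).card

/-- Step 2 of `φ`: the stable sort of the rows by their number of 0s, ascending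
(so that in an EW-tableau only 1s lie above every 1), ties (identical rows)
broken by original label, increasing top to bottom. -/
def sortRows (T : Tab m n) : Equiv.Perm (Fin (m + 1)) :=
  Tuple.sort fun i => (Finset.univ.filter fun j => T i j = false).card

/-- The tableau `T'` of Steps 1–2 of `φ`. -/
def sortedTab (T : Tab m n) : Tab m n := fun i j => T (sortRows T i) (sortCols T j)

/-- Step 4 of `φ`: `R i j = 1` iff (`T' i j = 1` and (`i = m` or `T' (i+1) j = 0`)) or
(`T' i j = 0` and (`j = n` or `T' i (j+1) = 1`)). -/
def step4 (S : Tab m n) : Tab m n := fun i j =>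
  (S i j && decide (∀ i' : Fin (m + 1), (i' : ℕ) = (i : ℕ) + 1 → S i' j = false)) ||
  (!S i j && decide (∀ j' : Fin (n + 1), (j' : ℕ) = (j : ℕ) + 1 → S i j' = true))

/-- The map `φ`: sort rows and columns, apply Step 4, and remember, as the
labelling, where each row and column of the original tableau went. -/
def phi (T : Tab m n) : Labelled m n :=
  ⟨step4 (sortedTab T), sortRows T, sortCols T⟩

/-- The tableau `T'` of the definition of `ψ`:
`T'_{ij} = 1` iff `(i,j) = (1,1)` or there is `k < j` with `R i k = 1`. -/
def psiPre (R : Tab m n) : Tab m n := fun i j =>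
  decide ((i = 0 ∧ j = 0) ∨ ∃ k : Fin (n + 1), k < j ∧ R i k = true)

/-- The map `ψ`: form `psiPre` of the underlying tableau and permute rows and
columns so that row and column labels are increasing (row `i` of the result is
the row of `psiPre D.T` labelled `v i`, and similarly for columns). -/
def psi (D : Labelled m n) : Tab m n := fun i j =>
  psiPre D.T (D.rl.symm i) (D.cl.symm j)

/-- The entry of `T` at `(i, j)` is a cornersupport entry: there is a
non-attacking entry with the opposite value at `(i', j')` such that the
other two corners `(i', j)` and `(i, j')` carry the same value as `(i, j)`. -/
def Cornersupport (T : Tab m n) (i : Fin (m + 1)) (j : Fin (n + 1)) : Prop :=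
  ∃ (i' : Fin (m + 1)) (j' : Fin (n + 1)),
    i' ≠ i ∧ j' ≠ j ∧ T i' j' ≠ T i j ∧ T i' j = T i j ∧ T i j' = T i j

instance (T : Tab m n) (i : Fin (m + 1)) (j : Fin (n + 1)) :
    Decidable (Cornersupport T i j) := by
  unfold Cornersupport; infer_instance

/-- `η` of the row labelled `v i`: the number of non-cornersupport 0s in row `i`. -/
def etaRow (T : Tab m n) (i : Fin (m + 1)) : ℕ :=
  (Finset.univ.filter fun j => T i j = false ∧ ¬ Cornersupport T i j).card

/-- `η` of the column labelled `v ((m+1)+j)`: the number of non-cornersupport 1s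
in column `j`. -/
def etaCol (T : Tab m n) (j : Fin (n + 1)) : ℕ :=
  (Finset.univ.filter fun i => T i j = true ∧ ¬ Cornersupport T i j).card

/-- A marked/decorated rectangular EW-tableau: a tableau together with a
decoration value for each row below the first (recorded as `arow`, with the
normalisation `arow 0 = 0` for the unmarked top row) and each column (`acol`). -/
structure MEW (m n : ℕ) where
  T : Tab m n
  arow : Fin (m + 1) → ℕ
  acol : Fin (n + 1) → ℕ

/-- Membership in `MEW_{m+1,n+1}`: the tableau is an EW-tableau and the
decorations satisfy `0 ≤ a_i ≤ η_i(T) - 1`. -/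
def IsMEW (M : MEW m n) : Prop :=
  IsEW M.T ∧ M.arow 0 = 0 ∧
  (∀ i : Fin (m + 1), i ≠ 0 → M.arow i < etaRow M.T i) ∧
  (∀ j : Fin (n + 1), M.acol j < etaCol M.T j)

/-- The expansion `⟨D, ζ⟩` of a labelled ribbon parallelogram polyomino `D` by a
surplus vector `ζ` (indexed by labels): the row labelled `v i` gets `ζ i` cells
appended to the left of its leftmost 1, the column labelled `v ((m+1)+j)` gets
`ζ' j` cells appended above its topmost 1; the rows and columns are then
reordered so as to satisfy the labelling convention (sorted by the position of
the new leftmost/topmost 1, ties broken by increasing label) and the interior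
is completed with 1s. -/
noncomputable def expand (D : Labelled m n)
    (zrow : Fin (m + 1) → ℕ) (zcol : Fin (n + 1) → ℕ) : Labelled m n :=
  let ell : Fin (m + 1) → ℕ := fun x => leftmost D.T x - zrow (D.rl x)
  let top : Fin (n + 1) → ℕ := fun y => topmost D.T y - zcol (D.cl y)
  let σ : Equiv.Perm (Fin (m + 1)) := Tuple.sort fun x => toLex (ell x, (D.rl x : ℕ))
  let τ : Equiv.Perm (Fin (n + 1)) := Tuple.sort fun y => toLex (top y, (D.cl y : ℕ))
  ⟨fun i j => decide (ell (σ i) ≤ (j : ℕ) ∧ top (τ j) ≤ (i : ℕ)),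
    σ.trans D.rl, τ.trans D.cl⟩

/-- The map `Φ` from marked EW-tableaux to labelled parallelogram polyominoes:
`Φ(T, a) = ⟨φ(T), ζ⟩` where `ζ_i = η_i(T) - a_i - 1`. -/
noncomputable def Phi (M : MEW m n) : Labelled m n :=
  expand (phi M.T) (fun i => etaRow M.T i - M.arow i - 1)
    (fun j => etaCol M.T j - M.acol j - 1)

/-- ℕ-indexed version of `rightmost` (junk value for out-of-range rows). -/
noncomputable def rmaxN (P : Tab m n) (i : ℕ) : ℕ :=
  sSup {j : ℕ | ∃ (hi : i < m + 1) (hj : j < n + 1), P ⟨i, hi⟩ ⟨j, hj⟩ = true}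

/-- The lowest 1 of column `j` (ℕ-indexed, junk value for out-of-range columns). -/
noncomputable def bmaxN (P : Tab m n) (j : ℕ) : ℕ :=
  sSup {i : ℕ | ∃ (hi : i < m + 1) (hj : j < n + 1), P ⟨i, hi⟩ ⟨j, hj⟩ = true}

/-- The rows of the successive horizontal segments of the bounce path of `P`:
start in row 0; having arrived in row `i`, move right to the rightmost 1 of
row `i` and then down to the lowest 1 of that column. -/
noncomputable def bncI (P : Tab m n) : ℕ → ℕ
  | 0 => 0
  | k + 1 => bmaxN P (rmaxN P (bncI P k))

/-- The columns of the successive vertical segments of the bounce path of `P`. -/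
noncomputable def bncJ (P : Tab m n) (k : ℕ) : ℕ := rmaxN P (bncI P k)

/-- The cell `(i, j)` is visited by the bounce path of `P`: it lies on the `k`-th
horizontal segment (row `bncI k`, columns `bncJ (k-1)` to `bncJ k`, starting at
column 0 when `k = 0`) or on the `k`-th vertical segment (column `bncJ k`, rows
`bncI k` to `bncI (k+1)`) for some `k`. -/
def BounceCell (P : Tab m n) (i j : ℕ) : Prop :=
  ∃ k : ℕ,
    (i = bncI P k ∧ (match k with | 0 => 0 | k' + 1 => bncJ P k') ≤ j ∧ j ≤ bncJ P k) ∨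
    (j = bncJ P k ∧ bncI P k ≤ i ∧ i ≤ bncI P (k + 1))

/-- The bounce path of `P`, as the 0/1 tableau whose 1s are exactly the cells
visited by the bounce path. -/
noncomputable def bounceTab (P : Tab m n) : Tab m n := fun i j =>
  @decide (BounceCell P (i : ℕ) (j : ℕ)) (Classical.propDecidable _)

/-- `rl'` is the row labelling of the bounce ribbon of `D` induced by `D`:
within each class of rows of `bounce D.T` having their leftmost 1 in the same
column, the labels increase top to bottom, and each such class carries the same
set of labels as it does under the labelling of `D`. -/
def InducedRows (D : Labelled m n) (rl' : Equiv.Perm (Fin (m + 1))) : Prop :=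
  (∀ i i' : Fin (m + 1), leftmost (bounceTab D.T) i = leftmost (bounceTab D.T) i' →
    i < i' → rl' i < rl' i') ∧
  (∀ c : ℕ,
    (Finset.univ.filter fun i => leftmost (bounceTab D.T) i = c).image rl' =
    (Finset.univ.filter fun i => leftmost (bounceTab D.T) i = c).image D.rl)

/-- `cl'` is the column labelling of the bounce ribbon of `D` induced by `D`. -/
def InducedCols (D : Labelled m n) (cl' : Equiv.Perm (Fin (n + 1))) : Prop :=
  (∀ j j' : Fin (n + 1), topmost (bounceTab D.T) j = topmost (bounceTab D.T) j' →
    j < j' → cl' j < cl' j') ∧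
  (∀ c : ℕ,
    (Finset.univ.filter fun j => topmost (bounceTab D.T) j = c).image cl' =
    (Finset.univ.filter fun j => topmost (bounceTab D.T) j = c).image D.cl)

/-- The surplus of the row label `v i`: the position of the leftmost 1 of the row
of the bounce ribbon labelled `v i` minus the position of the leftmost 1 of the
row of `D` labelled `v i`. -/
noncomputable def surpRow (D : Labelled m n) (rl' : Equiv.Perm (Fin (m + 1)))
    (i : Fin (m + 1)) : ℤ :=
  (leftmost (bounceTab D.T) (rl'.symm i) : ℤ) - (leftmost D.T (D.rl.symm i) : ℤ)

/-- The surplus of the column label `v ((m+1)+j)`. -/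
noncomputable def surpCol (D : Labelled m n) (cl' : Equiv.Perm (Fin (n + 1)))
    (j : Fin (n + 1)) : ℤ :=
  (topmost (bounceTab D.T) (cl'.symm j) : ℤ) - (topmost D.T (D.cl.symm j) : ℤ)

/-! In an EW-tableau the sets of rows carrying a 1 in a given column form a chain under
inclusion, so sorting the columns by their number of 1s turns every row into a block of 0s
followed by a block of 1s; the all-ones top row stays on top and every other row starts with
a 0. For such a tableau, Step 4 marks in each lower row the cell just before its first 1, so
"some cell strictly to the left is marked" holds exactly at the 1s: `psiPre` undoes Step 4,
and the labels undo the sorting. -/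

theorem _root_.Finset.monotone_of_total_of_monotone_card {ι α : Type*} [Preorder ι]
    {s : ι → Finset α} (hs : ∀ i j, s i ⊆ s j ∨ s j ⊆ s i)
    (hcard : Monotone fun i => (s i).card) : Monotone s := fun i j hij =>
  (hs i j).elim id fun hji => (Finset.eq_of_subset_of_card_le hji (hcard hij)).symm.subset

theorem _root_.Tuple.apply_sort_zero_le {k : ℕ} {α : Type*} [LinearOrder α]
    (f : Fin (k + 1) → α) (i : Fin (k + 1)) : f (Tuple.sort f 0) ≤ f i := by
  simpa using Tuple.monotone_sort f (Fin.zero_le ((Tuple.sort f).symm i))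

section Step4

variable {S : Tab m n} {i : Fin (m + 1)} {j : Fin (n + 1)}

lemma step4_eq_true_iff_of_true (h : S i j = true) :
    step4 S i j = true ↔ ∀ i' : Fin (m + 1), (i' : ℕ) = i + 1 → S i' j = false := by
  simp [step4, h]

lemma step4_eq_true_iff_of_false (h : S i j = false) :
    step4 S i j = true ↔ ∀ j' : Fin (n + 1), (j' : ℕ) = j + 1 → S i j' = true := by
  simp [step4, h]

/-- In a row of 0s followed by 1s, the first 1 of `step4 S` sits just before the first 1
of `S`. -/
lemma exists_lt_step4_eq_true_iff {a : Fin (m + 1)} (hmono : Monotone (S a))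
    (h0 : S a 0 = false) (j : Fin (n + 1)) :
    (∃ k < j, step4 S a k = true) ↔ S a j = true := by
  constructor
  · rintro ⟨k, hkj, hk⟩
    cases hSk : S a k with
    | true => exact top_le_iff.mp (hSk ▸ hmono hkj.le : true ≤ S a j)
    | false =>
      have hk1 : (k : ℕ) + 1 < n + 1 := by omega
      refine top_le_iff.mp (le_of_eq_of_le ?_ (hmono (show ⟨k + 1, hk1⟩ ≤ j from hkj)))
      exact ((step4_eq_true_iff_of_false hSk).mp hk _ rfl).symm
  · induction j using Fin.induction with
    | zero => simp [h0]
    | succ k ih =>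
      intro hSk1
      cases hSk : S a k.castSucc with
      | true =>
        obtain ⟨l, hlk, hl⟩ := ih hSk
        exact ⟨l, hlk.trans k.castSucc_lt_succ, hl⟩
      | false =>
        refine ⟨k.castSucc, k.castSucc_lt_succ, (step4_eq_true_iff_of_false hSk).mpr ?_⟩
        intro j' hj'
        rwa [show j' = k.succ from Fin.ext (by simpa using hj')]

lemma psiPre_step4 (hmono : ∀ a, Monotone (S a)) (htop : ∀ j, S 0 j = true)
    (hleft : ∀ a ≠ 0, S a 0 = false) : psiPre (step4 S) = S := by
  funext a j
  rcases eq_or_ne a 0 with rfl | ha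
  · rw [htop, psiPre, decide_eq_true_eq]
    rcases eq_or_ne j 0 with rfl | hj
    · exact .inl ⟨rfl, rfl⟩
    · refine .inr ⟨0, Fin.pos_of_ne_zero hj, (step4_eq_true_iff_of_true (htop 0)).mpr ?_⟩
      exact fun i' hi' => hleft i' (by rintro rfl; simp at hi')
  · simp [psiPre, ha, exists_lt_step4_eq_true_iff (hmono a) (hleft a ha)]

end Step4

variable {T : Tab m n}

def colOnes (T : Tab m n) (j : Fin (n + 1)) : Finset (Fin (m + 1)) :=
  Finset.univ.filter fun i => T i j = true

@[simp]
lemma mem_colOnes {i : Fin (m + 1)} {j : Fin (n + 1)} : i ∈ colOnes T j ↔ T i j = true := by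
  simp [colOnes]

lemma colOnes_total (hT : IsEW T) (j j' : Fin (n + 1)) :
    colOnes T j ⊆ colOnes T j' ∨ colOnes T j' ⊆ colOnes T j := by
  by_contra! h
  obtain ⟨⟨a, ha, ha'⟩, b, hb, hb'⟩ := h.imp Finset.not_subset.mp Finset.not_subset.mp
  simp only [mem_colOnes, Bool.not_eq_true] at ha ha' hb hb'
  have hab : a ≠ b := by rintro rfl; simp [ha'] at hb
  have hjj : j ≠ j' := by rintro rfl; simp [ha'] at ha
  rcases hT.2.2 a b j j' hab hjj ha hb with h | h
  · simp [ha'] at h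
  · simp [hb'] at h

lemma monotone_colOnes_sortCols (hT : IsEW T) : Monotone (colOnes T ∘ sortCols T) :=
  Finset.monotone_of_total_of_monotone_card (fun _ _ => colOnes_total hT _ _)
    (Tuple.monotone_sort fun j => (colOnes T j).card)

lemma sortRows_zero (hT : IsEW T) : sortRows T 0 = 0 := by
  by_contra hne
  obtain ⟨j, hj⟩ := hT.2.1 _ hne
  have hle : (Finset.univ.filter fun j' => T (sortRows T 0) j' = false).card ≤
      (Finset.univ.filter fun j' => T 0 j' = false).card :=
    Tuple.apply_sort_zero_le (fun i => (Finset.univ.filter fun j => T i j = false).card) 0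
  have hrow0 : (Finset.univ.filter fun j' => T 0 j' = false) = ∅ := by simp [hT.1]
  rw [hrow0, Finset.card_empty] at hle
  have hpos : 0 < (Finset.univ.filter fun j' => T (sortRows T 0) j' = false).card :=
    Finset.card_pos.mpr ⟨j, by simpa using hj⟩
  omega

lemma sortedTab_zero_apply (hT : IsEW T) (j : Fin (n + 1)) : sortedTab T 0 j = true := by
  simp [sortedTab, sortRows_zero hT, hT.1]

lemma sortedTab_apply_zero (hT : IsEW T) {a : Fin (m + 1)} (ha : a ≠ 0) :
    sortedTab T a 0 = false := by
  obtain ⟨c, hc⟩ := hT.2.1 (sortRows T a) <| by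
    rw [← sortRows_zero hT]; exact (sortRows T).injective.ne ha
  have hsub : colOnes T (sortCols T 0) ⊆ colOnes T c := by
    simpa using monotone_colOnes_sortCols hT (Fin.zero_le ((sortCols T).symm c))
  by_contra h
  have hmem := hsub (mem_colOnes.mpr (Bool.not_eq_false _ ▸ h))
  exact Bool.false_ne_true (hc.symm.trans (mem_colOnes.mp hmem))

lemma monotone_sortedTab (hT : IsEW T) (a : Fin (m + 1)) : Monotone (sortedTab T a) := by
  intro k j hkj
  cases h : sortedTab T a k with
  | false => exact Bool.false_le _
  | true =>
    have hmem := monotone_colOnes_sortCols hT hkj (mem_colOnes.mpr h)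
    exact (mem_colOnes.mp hmem).ge

/-- `ψ` is a left inverse of `φ`: for every rectangular
EW-tableau `T`, `ψ(φ(T)) = T`. -/
theorem psi_phi {m n : ℕ} (T : Tab m n) (hT : IsEW T) :
    psi (phi T) = T := by
  have h := psiPre_step4 (monotone_sortedTab hT) (sortedTab_zero_apply hT)
    fun _ => sortedTab_apply_zero hT
  funext i j
  simp [psi, phi, h, sortedTab]

end EWPaper
end

section
/- In a rectangular EW-tableau, the 1-supports of the columns form a chain under inclusion, and the 1-supports of the rows form a chain under inclusion: for any two columns k, k' of T ∈ EW_{m,n}, either every row with a 1 in column k also has a 1 in column k', or vice versa; and the analogous statement holds for any two rows. Consequently the columns can be permuted so that to the left of every 0 there are only 0s, and the rows can be permuted so that above every 1 there are only 1s, making the 1s of the resulting tableau form a Ferrers shape in the top right corner. -/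
/- Combinatorial objects from "EW-tableaux and parallelogram polyominoes".
A tableau of type `(m+1, n+1)` (i.e. with `m+1` rows and `n+1` columns) is a
0/1-filling, encoded as a function to `Bool` (`true` = 1).  Rows are indexed
top to bottom, columns left to right, both starting at `0`.  The row labelled
`v i` (for `i < m+1`) and the column labelled `v ((m+1)+j)` (for `j < n+1`)
are recorded through permutations `rl`, `cl` of `Fin (m+1)`, `Fin (n+1)`. -/

namespace EWPaper

variable {m n : ℕ}

/-!
If the 1-supports of two columns `k, k'` were incomparable, a row `i` with a 1 in column `k`
only and a row `i'` with a 1 in column `k'` only would span a forbidden rectangle; the rows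
are handled by transposing. A chain of finite sets is ordered by cardinality, so sorting
the columns by their number of 1s (and the rows by their number of 0s) makes the supports
monotone, which is exactly the Ferrers shape.
-/

section Chains

variable {ι κ : Type*}

/-- Condition (iii) of an EW-tableau. -/
def CheckerFree (T : ι → κ → Bool) : Prop :=
  ∀ (i i' : ι) (j j' : κ), i ≠ i' → j ≠ j' →
    T i j = true → T i' j' = true → (T i j' = true ∨ T i' j = true)

theorem IsEW.checkerFree {T : Tab m n} (hT : IsEW T) : CheckerFree T := hT.2.2

variable {T : ι → κ → Bool}

theorem CheckerFree.swap (h : CheckerFree T) : CheckerFree (Function.swap T) :=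
  fun j j' i i' hj hi hT hT' => (h i i' j j' hi hj hT hT').symm

theorem CheckerFree.col_chain (h : CheckerFree T) (k k' : κ) :
    (∀ i, T i k = true → T i k' = true) ∨ (∀ i, T i k' = true → T i k = true) := by
  by_contra! ⟨⟨i, hik, hik'⟩, ⟨i', hi'k', hi'k⟩⟩
  have hi : i ≠ i' := by rintro rfl; exact hik' hi'k'
  have hk : k ≠ k' := by rintro rfl; exact hik' hik
  rcases h i i' k k' hi hk hik hi'k' with h' | h'
  · exact hik' h'
  · exact hi'k h'

theorem CheckerFree.row_chain (h : CheckerFree T) (r r' : ι) :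
    (∀ j, T r j = true → T r' j = true) ∨ (∀ j, T r' j = true → T r j = true) :=
  h.swap.col_chain r r'

end Chains

theorem _root_.Finset.subset_of_total_of_card_le {α : Type*} {s t : Finset α}
    (h : s ⊆ t ∨ t ⊆ s) (hst : s.card ≤ t.card) : s ⊆ t :=
  h.elim id fun hts => (Finset.eq_of_subset_of_card_le hts hst).ge

theorem monotone_comp_sort_card {α : Type*} {k : ℕ} {S : Fin k → Finset α}
    (h : ∀ a b, S a ⊆ S b ∨ S b ⊆ S a) : Monotone (S ∘ Tuple.sort fun a => (S a).card) :=
  fun _ _ hab =>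
    Finset.subset_of_total_of_card_le (h _ _) (Tuple.monotone_sort (fun a => (S a).card) hab)

section Sorting

open _root_.Finset

variable {T : Tab m n}

theorem CheckerFree.sortCols_mono (h : CheckerFree T) {i : Fin (m + 1)} {j j' : Fin (n + 1)}
    (hj : j ≤ j') (hT : T i (sortCols T j) = true) : T i (sortCols T j') = true := by
  have hchain : ∀ k k' : Fin (n + 1),
      univ.filter (T · k = true) ⊆ univ.filter (T · k' = true) ∨
        univ.filter (T · k' = true) ⊆ univ.filter (T · k = true) := by
    simpa only [subset_iff, mem_filter, mem_univ, true_and] using h.col_chain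
  have hsub :
      univ.filter (T · (sortCols T j) = true) ⊆ univ.filter (T · (sortCols T j') = true) :=
    monotone_comp_sort_card hchain hj
  simpa using hsub (by simpa using hT)

theorem CheckerFree.sortRows_anti (h : CheckerFree T) {i i' : Fin (m + 1)} {j : Fin (n + 1)}
    (hi : i' ≤ i) (hT : T (sortRows T i) j = true) : T (sortRows T i') j = true := by
  have hchain : ∀ r r' : Fin (m + 1),
      univ.filter (T r · = false) ⊆ univ.filter (T r' · = false) ∨
        univ.filter (T r' · = false) ⊆ univ.filter (T r · = false) := by
    intro r r'
    simp only [subset_iff, mem_filter, mem_univ, true_and, Bool.eq_false_iff, ne_eq]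
    exact (h.row_chain r' r).imp (fun h j => mt (h j)) (fun h j => mt (h j))
  have hsub :
      univ.filter (T (sortRows T i') · = false) ⊆ univ.filter (T (sortRows T i) · = false) :=
    monotone_comp_sort_card hchain hi
  by_contra hT'
  have hzero : T (sortRows T i) j = false := by simpa using hsub (by simpa using hT')
  exact Bool.false_ne_true (hzero.symm.trans hT)

end Sorting

/-- In a rectangular EW-tableau the 1-supports of the columns
form a chain under inclusion, as do the 1-supports of the rows; consequently the
rows and columns can be permuted so that in the resulting tableau only 0s lie to
the left of every 0 and only 1s lie above every 1, i.e. the 1s form a Ferrers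
shape in the top right corner. -/
theorem supports_chain {m n : ℕ} (T : Tab m n) (hT : IsEW T) :
    (∀ k k' : Fin (n + 1),
      (∀ i, T i k = true → T i k' = true) ∨ (∀ i, T i k' = true → T i k = true)) ∧
    (∀ r r' : Fin (m + 1),
      (∀ j, T r j = true → T r' j = true) ∨ (∀ j, T r' j = true → T r j = true)) ∧
    ∃ (σ : Equiv.Perm (Fin (m + 1))) (τ : Equiv.Perm (Fin (n + 1))),
      (∀ (i : Fin (m + 1)) (j j' : Fin (n + 1)), j ≤ j' →
        T (σ i) (τ j) = true → T (σ i) (τ j') = true) ∧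
      (∀ (i i' : Fin (m + 1)) (j : Fin (n + 1)), i' ≤ i →
        T (σ i) (τ j) = true → T (σ i') (τ j) = true) := by
  have h := hT.checkerFree
  exact ⟨h.col_chain, h.row_chain, sortRows T, sortCols T,
    fun _ _ _ hj => h.sortCols_mono hj, fun _ _ _ hi => h.sortRows_anti hi⟩

end EWPaper
end
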